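/- Let $H$ be an $n \times d$ random matrix on a probability space $(\Omega, \mathcal{F}, \mathbb{P})$ such that $M = \mathbb{E}(HH^T)$ is invertible. Then for any $b \in \mathbb{R}^n$, the minimum of $\mathbb{E}\|Y\|^2$ over all square-integrable $\mathbb{R}^d$-valued random variables $Y$ with $\mathbb{E}(HY) = b$ equals $b^T M^{-1} b$, and the minimum is attained at $Y = H^T M^{-1} b$. -/

import Mathlib

/-!
With `c = M⁻¹ b` and `Y₀ = Hᵀ c`, every square-integrable `Y` satisfies
`𝔼⟪Y, Y₀⟫ = ⟪𝔼(HY), c⟫`. Hence `Y₀` is feasible (`𝔼(H Y₀) = M c = b`), and any feasible `Y`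
has `𝔼⟪Y, Y₀⟫ = ⟪b, c⟫ = 𝔼‖Y₀‖²`, i.e. `Y - Y₀ ⟂ Y₀` in `L²`, whence
`𝔼‖Y‖² = 𝔼‖Y₀‖² + 𝔼‖Y - Y₀‖² ≥ bᵀ M⁻¹ b`.
-/

open MeasureTheory Matrix

section VectorIntegrals

variable {Ω : Type*} [MeasurableSpace Ω] {μ : Measure Ω} {ι m : Type*} [Fintype ι]

lemma integrable_dotProduct {Y Z : Ω → ι → ℝ} (hY : ∀ j, MemLp (fun ω => Y ω j) 2 μ)
    (hZ : ∀ j, MemLp (fun ω => Z ω j) 2 μ) : Integrable (fun ω => Y ω ⬝ᵥ Z ω) μ :=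
  integrable_finsetSum _ fun j _ => (hY j).integrable_mul (hZ j)

lemma integral_dotProduct_const {f : Ω → ι → ℝ} (hf : ∀ i, Integrable (fun ω => f ω i) μ)
    (c : ι → ℝ) : ∫ ω, f ω ⬝ᵥ c ∂μ = (fun i => ∫ ω, f ω i ∂μ) ⬝ᵥ c := by
  simp only [dotProduct]
  rw [integral_finsetSum _ fun i _ => (hf i).mul_const (c i)]
  simp only [integral_mul_const]

lemma integral_mulVec_const {A : Ω → Matrix m ι ℝ} (hA : ∀ i j, Integrable (fun ω => A ω i j) μ)
    (c : ι → ℝ) (i : m) :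
    ∫ ω, (A ω *ᵥ c) i ∂μ = ((Matrix.of fun i j => ∫ ω, A ω i j ∂μ) *ᵥ c) i :=
  integral_dotProduct_const (hA i) c

lemma memLp_mulVec_const {p : ENNReal} {A : Ω → Matrix m ι ℝ}
    (hA : ∀ i j, MemLp (fun ω => A ω i j) p μ) (c : ι → ℝ) (i : m) :
    MemLp (fun ω => (A ω *ᵥ c) i) p μ :=
  memLp_finsetSum _ fun j _ => (hA i j).mul_const (c j)

lemma integral_dotProduct_transpose_mulVec [Fintype m] {H : Ω → Matrix m ι ℝ}
    (hH : ∀ i j, MemLp (fun ω => H ω i j) 2 μ) {Y : Ω → ι → ℝ}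
    (hY : ∀ j, MemLp (fun ω => Y ω j) 2 μ) (c : m → ℝ) :
    ∫ ω, Y ω ⬝ᵥ ((H ω)ᵀ *ᵥ c) ∂μ = (fun i => ∫ ω, (H ω *ᵥ Y ω) i ∂μ) ⬝ᵥ c := by
  simp only [dotProduct_mulVec, vecMul_transpose]
  exact integral_dotProduct_const (fun i => integrable_dotProduct (hH i) hY) c

lemma integral_mulVec_transpose_mulVec [Fintype m] {H : Ω → Matrix m ι ℝ}
    (hH : ∀ i j, MemLp (fun ω => H ω i j) 2 μ) (c : m → ℝ) (i : m) :
    ∫ ω, (H ω *ᵥ ((H ω)ᵀ *ᵥ c)) i ∂μ =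
      ((Matrix.of fun i k => ∫ ω, (H ω * (H ω)ᵀ) i k ∂μ) *ᵥ c) i := by
  simp only [mulVec_mulVec]
  exact integral_mulVec_const (fun i k => integrable_dotProduct (hH i) (hH k)) c i

lemma integral_dotProduct_self_le {Y Z : Ω → ι → ℝ} (hY : ∀ j, MemLp (fun ω => Y ω j) 2 μ)
    (hZ : ∀ j, MemLp (fun ω => Z ω j) 2 μ)
    (horth : ∫ ω, Y ω ⬝ᵥ Z ω ∂μ = ∫ ω, Z ω ⬝ᵥ Z ω ∂μ) :
    ∫ ω, Z ω ⬝ᵥ Z ω ∂μ ≤ ∫ ω, Y ω ⬝ᵥ Y ω ∂μ := by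
  have hexpand : ∀ ω, (Y ω - Z ω) ⬝ᵥ (Y ω - Z ω) =
      Y ω ⬝ᵥ Y ω - 2 * Y ω ⬝ᵥ Z ω + Z ω ⬝ᵥ Z ω := by
    intro ω
    simp only [sub_dotProduct, dotProduct_sub, dotProduct_comm (Z ω) (Y ω)]
    ring
  have hnonneg : 0 ≤ ∫ ω, (Y ω - Z ω) ⬝ᵥ (Y ω - Z ω) ∂μ :=
    integral_nonneg fun ω => dotProduct_self_star_nonneg (Y ω - Z ω)
  have hYY := integrable_dotProduct hY hY
  have hYZ := (integrable_dotProduct hY hZ).const_mul 2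
  have hZZ := integrable_dotProduct hZ hZ
  simp only [hexpand] at hnonneg
  rw [integral_add (f := fun ω => Y ω ⬝ᵥ Y ω - 2 * Y ω ⬝ᵥ Z ω) (hYY.sub hYZ) hZZ,
    integral_sub hYY hYZ, integral_const_mul, horth] at hnonneg
  linarith

end VectorIntegrals

theorem stmt_1_general {Ω : Type*} [MeasureSpace Ω]
    {n d : ℕ} (H : Ω → Matrix (Fin n) (Fin d) ℝ)
    (hH : ∀ i j, MemLp (fun ω => H ω i j) 2 volume)
    (M : Matrix (Fin n) (Fin n) ℝ)
    (hM : ∀ i j, M i j = ∫ ω, (H ω * (H ω)ᵀ) i j)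
    (hMinv : IsUnit M.det) (b : Fin n → ℝ) :
    IsLeast {E : ℝ | ∃ Y : Ω → Fin d → ℝ,
        (∀ j, MemLp (fun ω => Y ω j) 2 volume) ∧
        (∀ i, (∫ ω, (H ω *ᵥ Y ω) i) = b i) ∧
        E = ∫ ω, ∑ j, (Y ω j) ^ 2}
      (b ⬝ᵥ M⁻¹ *ᵥ b) ∧
    (∀ i, (∫ ω, (H ω *ᵥ ((H ω)ᵀ *ᵥ (M⁻¹ *ᵥ b))) i) = b i) ∧
    (∫ ω, ∑ j, (((H ω)ᵀ *ᵥ (M⁻¹ *ᵥ b)) j) ^ 2) = b ⬝ᵥ M⁻¹ *ᵥ b := by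
  set Y₀ : Ω → Fin d → ℝ := fun ω => (H ω)ᵀ *ᵥ (M⁻¹ *ᵥ b)
  have hsq : ∀ v : Fin d → ℝ, ∑ j, v j ^ 2 = v ⬝ᵥ v := fun v => by simp only [dotProduct, sq]
  have hY₀ : ∀ j, MemLp (fun ω => Y₀ ω j) 2 volume :=
    memLp_mulVec_const (fun i j => hH j i) _
  have hMeq : (Matrix.of fun i k => ∫ ω, (H ω * (H ω)ᵀ) i k) = M := by ext i k; simp [hM]
  have hfeas : ∀ i, ∫ ω, (H ω *ᵥ Y₀ ω) i = b i := fun i => by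
    rw [integral_mulVec_transpose_mulVec hH, hMeq, mulVec_mulVec, mul_nonsing_inv M hMinv,
      one_mulVec]
  have hinner : ∀ Y : Ω → Fin d → ℝ, (∀ j, MemLp (fun ω => Y ω j) 2 volume) →
      (∀ i, ∫ ω, (H ω *ᵥ Y ω) i = b i) → ∫ ω, Y ω ⬝ᵥ Y₀ ω = b ⬝ᵥ M⁻¹ *ᵥ b := by
    intro Y hY hYb
    rw [integral_dotProduct_transpose_mulVec hH hY, funext hYb]
  have hvalue : ∫ ω, ∑ j, Y₀ ω j ^ 2 = b ⬝ᵥ M⁻¹ *ᵥ b := by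
    simp only [hsq]
    exact hinner Y₀ hY₀ hfeas
  refine ⟨⟨⟨Y₀, hY₀, hfeas, hvalue.symm⟩, ?_⟩, hfeas, hvalue⟩
  rintro E ⟨Y, hY, hYb, rfl⟩
  simp only [hsq] at hvalue ⊢
  rw [← hvalue]
  exact integral_dotProduct_self_le hY hY₀ (by rw [hinner Y hY hYb, hvalue])

/-- Quadratic minimization: if `M = 𝔼(HHᵀ)` is invertible, then the minimum of `𝔼‖Y‖²`
over square-integrable `Y : Ω → ℝ^d` with `𝔼(HY) = b` equals `bᵀM⁻¹b`, and the minimum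
is attained at `Y = Hᵀ M⁻¹ b`. -/
theorem stmt_1 {Ω : Type*} [MeasureSpace Ω] [IsProbabilityMeasure (volume : Measure Ω)]
    {n d : ℕ} (H : Ω → Matrix (Fin n) (Fin d) ℝ)
    (hH : ∀ i j, MemLp (fun ω => H ω i j) 2 volume)
    (M : Matrix (Fin n) (Fin n) ℝ)
    (hM : ∀ i j, M i j = ∫ ω, (H ω * (H ω)ᵀ) i j)
    (hMinv : IsUnit M.det) (b : Fin n → ℝ) :
    IsLeast {E : ℝ | ∃ Y : Ω → Fin d → ℝ,
        (∀ j, MemLp (fun ω => Y ω j) 2 volume) ∧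
        (∀ i, (∫ ω, (H ω *ᵥ Y ω) i) = b i) ∧
        E = ∫ ω, ∑ j, (Y ω j) ^ 2}
      (b ⬝ᵥ M⁻¹ *ᵥ b) ∧
    (∀ i, (∫ ω, (H ω *ᵥ ((H ω)ᵀ *ᵥ (M⁻¹ *ᵥ b))) i) = b i) ∧
    (∫ ω, ∑ j, (((H ω)ᵀ *ᵥ (M⁻¹ *ᵥ b)) j) ^ 2) = b ⬝ᵥ M⁻¹ *ᵥ b :=
  stmt_1_general H hH M hM hMinv b
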